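/- The difference of Wehrl entropies H_W(ρ_G) − H_W(ρ) is invariant under the simultaneous uniform scaling Q(z) ↦ λ²Q(λz) of the Q function: if both Q and its Gaussian partner (same first and second moments) are scaled by the same λ ∈ (0,1], then the entropy difference is unchanged. Concretely, for the PATS this gives N(ρ_PATS^{(m,x)}) = log(m+1) − m − log(m!) + m·ψ(m+1), independent of x ∈ [0,1). -/

import Mathlib

/-!
Both Husimi functions are radial and of the form `c · g(c |z|²)` with `g` a Gamma density on
`(0, ∞)`: `g = t^m e^{-t}/m!` with `c = 1 - x` for the photon-added thermal state, and
`g = e^{-t}` with `c = (1 - x)/(m + 1)` for its Gaussian partner. Passing to `t = |z|²` and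
rescaling `t ↦ c t`, the Wehrl entropy of `c · g(c |z|²)` is `-∫ g log g - log c`, so the
difference of the two entropies no longer depends on `x`. What is left are the Gamma moments
`∫ t^n e^{-t} = n!` and `∫ t^m e^{-t} log t = Γ'(m+1) = m! (H_m - γ)`.
-/

open MeasureTheory Real Set
open scoped Nat

noncomputable def wehrlEntropy (Q : ℂ → ℝ) : ℝ := -(1 / π) * ∫ z, Q z * log (Q z)

noncomputable def gammaDensity (m : ℕ) (t : ℝ) : ℝ := t ^ m * exp (-t) / m !

theorem integral_comp_sq_norm_complex (F : ℝ → ℝ) :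
    ∫ z : ℂ, F (‖z‖ ^ 2) = π * ∫ t in Ioi 0, F t := by
  have hpolar := integral_fun_norm_addHaar (volume : Measure ℂ) (fun r => F (r ^ 2))
  have hsq := integral_comp_rpow_Ioi_of_pos (g := F) two_pos
  have hball : volume.real (Metric.ball (0 : ℂ) 1) = π := by
    simp [Measure.real, Complex.volume_ball]
  rw [Complex.finrank_real_complex, hball] at hpolar
  rw [hpolar, ← hsq, ← integral_const_mul, nsmul_eq_mul, smul_eq_mul, ← integral_const_mul,
    ← integral_const_mul]
  refine setIntegral_congr_fun measurableSet_Ioi fun r _ => ?_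
  norm_num [rpow_two]
  ring

theorem wehrlEntropy_comp_sq_norm (q : ℝ → ℝ) :
    wehrlEntropy (fun z => q (‖z‖ ^ 2)) = -∫ t in Ioi 0, q t * log (q t) := by
  rw [wehrlEntropy, integral_comp_sq_norm_complex (fun t => q t * log (q t))]
  field_simp [pi_ne_zero]

theorem integral_mul_log_comp_mul_left_Ioi {g : ℝ → ℝ} (hg : IntegrableOn g (Ioi 0))
    (hglog : IntegrableOn (fun t => g t * log (g t)) (Ioi 0)) {c : ℝ} (hc : 0 < c) :
    ∫ t in Ioi 0, c * g (c * t) * log (c * g (c * t))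
      = log c * (∫ t in Ioi 0, g t) + ∫ t in Ioi 0, g t * log (g t) := by
  have hpoint (y : ℝ) : c * y * log (c * y) = c * (log c * y + y * log y) := by
    rcases eq_or_ne y 0 with rfl | hy
    · simp
    · rw [log_mul hc.ne' hy]; ring
  simp_rw [hpoint]
  rw [integral_const_mul, integral_comp_mul_left_Ioi (fun t => log c * g t + g t * log (g t)) 0 hc,
    mul_zero, smul_eq_mul, mul_inv_cancel_left₀ hc.ne', integral_add (hg.const_mul _) hglog,
    integral_const_mul]

theorem integrableOn_rpow_mul_exp_neg {s : ℝ} (hs : -1 < s) :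
    IntegrableOn (fun t => t ^ s * exp (-t)) (Ioi 0) := by
  simpa using integrableOn_rpow_mul_exp_neg_mul_rpow hs one_pos one_pos

theorem integrableOn_pow_mul_exp_neg (n : ℕ) :
    IntegrableOn (fun t => t ^ n * exp (-t)) (Ioi 0) := by
  simpa using integrableOn_rpow_mul_exp_neg (s := n) (by linarith [n.cast_nonneg' (α := ℝ)])

theorem integral_pow_mul_exp_neg (n : ℕ) : ∫ t in Ioi 0, t ^ n * exp (-t) = n ! := by
  rw [← Real.Gamma_nat_eq_factorial, Real.Gamma_eq_integral (by positivity)]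
  refine setIntegral_congr_fun measurableSet_Ioi fun t _ => ?_
  simp [mul_comm]

theorem abs_log_le_two_mul_rpow_add {t : ℝ} (ht : 0 < t) :
    |log t| ≤ 2 * (t ^ (1 / 2 : ℝ) + t ^ (-(1 / 2) : ℝ)) := by
  have hup := log_le_rpow_div ht.le (ε := 1 / 2) (by norm_num)
  have hlow := log_le_rpow_div (inv_pos.2 ht).le (ε := 1 / 2) (by norm_num)
  rw [log_inv, inv_rpow ht.le, ← rpow_neg ht.le] at hlow
  rw [abs_le]
  constructor <;> nlinarith [rpow_pos_of_pos ht (1 / 2 : ℝ), rpow_pos_of_pos ht (-(1 / 2) : ℝ)]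

theorem integrableOn_pow_mul_exp_neg_mul_log (n : ℕ) :
    IntegrableOn (fun t => t ^ n * exp (-t) * log t) (Ioi 0) := by
  have hdom : IntegrableOn (fun t : ℝ => 2 * (t ^ ((n : ℝ) + 1 / 2) * exp (-t)
      + t ^ ((n : ℝ) - 1 / 2) * exp (-t))) (Ioi 0) :=
    ((integrableOn_rpow_mul_exp_neg (by linarith [n.cast_nonneg' (α := ℝ)])).add
      (integrableOn_rpow_mul_exp_neg (by linarith [n.cast_nonneg' (α := ℝ)]))).const_mul 2
  refine hdom.mono' (by fun_prop) ((ae_restrict_iff' measurableSet_Ioi).2 ?_)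
  filter_upwards with t (ht : 0 < t)
  rw [norm_mul, norm_of_nonneg (by positivity), norm_eq_abs]
  calc t ^ n * exp (-t) * |log t|
      ≤ t ^ n * exp (-t) * (2 * (t ^ (1 / 2 : ℝ) + t ^ (-(1 / 2) : ℝ))) := by
        gcongr; exact abs_log_le_two_mul_rpow_add ht
    _ = _ := by rw [rpow_add ht, rpow_sub ht, rpow_neg ht.le, rpow_natCast]; ring

theorem integral_pow_mul_exp_neg_mul_log (n : ℕ) :
    ∫ t in Ioi 0, t ^ n * exp (-t) * log t = n ! * (harmonic n - eulerMascheroniConstant) := by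
  have hre : (0 : ℝ) < ((n : ℂ) + 1).re := by simp; positivity
  have hGamma := (Complex.hasDerivAt_GammaIntegral hre).congr_of_eventuallyEq <| by
    filter_upwards [(Complex.continuous_re.isOpen_preimage _ isOpen_Ioi).mem_nhds hre]
      with s hs using Complex.Gamma_eq_integral hs
  have hcast : ∫ t : ℝ in Ioi 0, (t : ℂ) ^ ((n : ℂ) + 1 - 1) * ((log t : ℂ) * (exp (-t) : ℂ))
      = ((∫ t in Ioi 0, t ^ n * exp (-t) * log t : ℝ) : ℂ) := by
    rw [← integral_complex_ofReal]
    refine setIntegral_congr_fun measurableSet_Ioi fun t _ => ?_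
    rw [add_sub_cancel_right, Complex.cpow_natCast]
    push_cast
    ring
  have hval := hGamma.unique (Complex.hasDerivAt_Gamma_nat n)
  rw [hcast, neg_add_eq_sub] at hval
  exact_mod_cast hval

theorem integrableOn_gammaDensity (m : ℕ) : IntegrableOn (gammaDensity m) (Ioi 0) :=
  (integrableOn_pow_mul_exp_neg m).div_const _

theorem integral_gammaDensity (m : ℕ) : ∫ t in Ioi 0, gammaDensity m t = 1 := by
  simp only [gammaDensity]
  rw [integral_div, integral_pow_mul_exp_neg, div_self (by positivity)]

theorem gammaDensity_mul_log {m : ℕ} {t : ℝ} (ht : 0 < t) :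
    gammaDensity m t * log (gammaDensity m t)
      = (m * (t ^ m * exp (-t) * log t) - t ^ (m + 1) * exp (-t)
          - log m ! * (t ^ m * exp (-t))) / m ! := by
  rw [gammaDensity, log_div (by positivity) (by positivity), log_mul (by positivity) (by positivity),
    log_pow, log_exp]
  ring

theorem integrableOn_gammaDensity_mul_log (m : ℕ) :
    IntegrableOn (fun t => gammaDensity m t * log (gammaDensity m t)) (Ioi 0) := by
  refine IntegrableOn.congr_fun ?_ (fun t ht => (gammaDensity_mul_log ht).symm) measurableSet_Ioi
  exact ((((integrableOn_pow_mul_exp_neg_mul_log m).const_mul _).sub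
    (integrableOn_pow_mul_exp_neg (m + 1))).sub
    ((integrableOn_pow_mul_exp_neg m).const_mul _)).div_const _

theorem integral_gammaDensity_mul_log (m : ℕ) :
    ∫ t in Ioi 0, gammaDensity m t * log (gammaDensity m t)
      = m * (harmonic m - eulerMascheroniConstant) - (m + 1) - log m ! := by
  have hlog : IntegrableOn (fun t => m * (t ^ m * exp (-t) * log t)) (Ioi 0) :=
    (integrableOn_pow_mul_exp_neg_mul_log m).const_mul _
  have hsucc := integrableOn_pow_mul_exp_neg (m + 1)
  have hdiff : IntegrableOn
      (fun t => m * (t ^ m * exp (-t) * log t) - t ^ (m + 1) * exp (-t)) (Ioi 0) :=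
    hlog.sub hsucc
  rw [setIntegral_congr_fun measurableSet_Ioi fun t ht => gammaDensity_mul_log ht, integral_div,
    integral_sub hdiff ((integrableOn_pow_mul_exp_neg m).const_mul _),
    integral_sub hlog hsucc, integral_const_mul, integral_const_mul,
    integral_pow_mul_exp_neg_mul_log, integral_pow_mul_exp_neg, integral_pow_mul_exp_neg,
    Nat.factorial_succ]
  push_cast
  field_simp

theorem wehrlEntropy_gammaDensity {c : ℝ} (hc : 0 < c) (m : ℕ) :
    wehrlEntropy (fun z => c * gammaDensity m (c * ‖z‖ ^ 2))
      = m + 1 + log m ! - log c - m * (harmonic m - eulerMascheroniConstant) := by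
  rw [wehrlEntropy_comp_sq_norm (fun t => c * gammaDensity m (c * t)),
    integral_mul_log_comp_mul_left_Ioi (integrableOn_gammaDensity m)
      (integrableOn_gammaDensity_mul_log m) hc,
    integral_gammaDensity, integral_gammaDensity_mul_log]
  ring

theorem pats_nonGaussianity_general (m : ℕ) (x : ℝ) (hx1 : x < 1) :
    (-(1 / π) * ∫ z : ℂ,
        ((1 - x) / (m + 1) * Real.exp (-(1 - x) * ‖z‖ ^ 2 / (m + 1))) *
          Real.log ((1 - x) / (m + 1) * Real.exp (-(1 - x) * ‖z‖ ^ 2 / (m + 1))))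
      - (-(1 / π) * ∫ z : ℂ,
          ((1 - x) ^ (m + 1) / (m.factorial : ℝ) * ‖z‖ ^ (2 * m)
              * Real.exp (-(1 - x) * ‖z‖ ^ 2)) *
            Real.log ((1 - x) ^ (m + 1) / (m.factorial : ℝ) * ‖z‖ ^ (2 * m)
              * Real.exp (-(1 - x) * ‖z‖ ^ 2))) =
      Real.log (m + 1) - m - Real.log (m.factorial : ℝ)
        + m * ((harmonic m : ℝ) - Real.eulerMascheroniConstant) := by
  have hc : 0 < 1 - x := by linarith
  have hpartner (z : ℂ) : (1 - x) / (m + 1) * exp (-(1 - x) * ‖z‖ ^ 2 / (m + 1))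
      = (1 - x) / (m + 1) * gammaDensity 0 ((1 - x) / (m + 1) * ‖z‖ ^ 2) := by
    simp only [gammaDensity]; ring_nf
  have hpats (z : ℂ) : (1 - x) ^ (m + 1) / (m ! : ℝ) * ‖z‖ ^ (2 * m) * exp (-(1 - x) * ‖z‖ ^ 2)
      = (1 - x) * gammaDensity m ((1 - x) * ‖z‖ ^ 2) := by
    rw [gammaDensity, pow_mul, mul_pow, neg_mul]
    ring
  simp_rw [hpartner, hpats]
  change wehrlEntropy _ - wehrlEntropy _ = _
  rw [wehrlEntropy_gammaDensity (by positivity), wehrlEntropy_gammaDensity hc,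
    log_div hc.ne' (by positivity)]
  norm_num
  ring

/-- The non-Gaussianity of the photon-added thermal state — the difference of
the Wehrl entropy of its Gaussian partner (same first and second moments) and
its own Wehrl entropy — equals `log(m+1) - m - log(m!) + m ψ(m+1)`,
independently of the temperature parameter `x`. -/
theorem pats_nonGaussianity (m : ℕ) (x : ℝ) (hx0 : 0 ≤ x) (hx1 : x < 1) :
    (-(1 / π) * ∫ z : ℂ,
        ((1 - x) / (m + 1) * Real.exp (-(1 - x) * ‖z‖ ^ 2 / (m + 1))) *
          Real.log ((1 - x) / (m + 1) * Real.exp (-(1 - x) * ‖z‖ ^ 2 / (m + 1))))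
      - (-(1 / π) * ∫ z : ℂ,
          ((1 - x) ^ (m + 1) / (m.factorial : ℝ) * ‖z‖ ^ (2 * m)
              * Real.exp (-(1 - x) * ‖z‖ ^ 2)) *
            Real.log ((1 - x) ^ (m + 1) / (m.factorial : ℝ) * ‖z‖ ^ (2 * m)
              * Real.exp (-(1 - x) * ‖z‖ ^ 2))) =
      Real.log (m + 1) - m - Real.log (m.factorial : ℝ)
        + m * ((harmonic m : ℝ) - Real.eulerMascheroniConstant) :=
  pats_nonGaussianity_general m x hx1
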